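/- Let G be a strongly topologically orderable gyrogroup. Then either G is metrizable, or G has a totally ordered local base ℋ at the identity consisting of clopen L-subgyrogroups H such that gyr[x,y](H) = H for all x, y ∈ G and H ∈ ℋ. -/

import Mathlib

open Set Topology

universe u

class Gyrogroup (G : Type u) where
  op : G → G → G
  one : G
  inv : G → G
  gyr : G → G → G ≃ G
  one_op : ∀ g, op one g = g
  op_one : ∀ g, op g one = g
  inv_op : ∀ g, op (inv g) g = one
  op_inv : ∀ g, op g (inv g) = one
  unique_one : ∀ e : G, (∀ g, op e g = g ∧ op g e = g) → e = one
  unique_inv : ∀ g h : G, (op h g = one ∧ op g h = one) → h = inv g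
  gyr_op : ∀ g h f, op g (op h f) = op (op g h) (gyr g h f)
  gyr_hom : ∀ g h a b, gyr g h (op a b) = op (gyr g h a) (gyr g h b)
  loop : ∀ g h, gyr g h = gyr (op g h) h

namespace Gyrogroup

variable {G : Type u} [Gyrogroup G]

/-- `H` is a subgyrogroup: nonempty and a gyrogroup under the restricted operations. -/
def IsSubgyrogroup (H : Set G) : Prop :=
  H.Nonempty ∧ one ∈ H ∧
  (∀ a ∈ H, ∀ b ∈ H, op a b ∈ H) ∧
  (∀ a ∈ H, inv a ∈ H) ∧
  (∀ a ∈ H, ∀ b ∈ H, Set.BijOn (gyr a b) H H)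

/-- `H` is an L-subgyrogroup: `gyr g h` fixes `H` setwise for every `g ∈ G`, `h ∈ H`. -/
def IsLSubgyrogroup (H : Set G) : Prop :=
  IsSubgyrogroup H ∧ ∀ g : G, ∀ h ∈ H, (gyr g h) '' H = H

def leftCoset (a : G) (H : Set G) : Set G := (fun h => op a h) '' H

/-- The subgyrogroup generated by `S`. -/
def generatedSubgyrogroup (S : Set G) : Set G :=
  ⋂₀ {H : Set G | IsSubgyrogroup H ∧ S ⊆ H}

/-- The gyrogroup operations are continuous (topological gyrogroup). -/
def ContinuousGyroOps (G : Type u) [Gyrogroup G] [TopologicalSpace G] : Prop :=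
  Continuous (fun p : G × G => op p.1 p.2) ∧ Continuous (inv : G → G)

/-- The topology coincides with the order topology of some linear order. -/
def TopologicallyOrderable (G : Type u) [t : TopologicalSpace G] : Prop :=
  ∃ l : LinearOrder G, t = TopologicalSpace.generateFrom
      {s : Set G | ∃ a : G, s = {x | l.lt a x} ∨ s = {x | l.lt x a}}

/-- A strongly topological gyrogroup: a topological gyrogroup with a neighborhood base
at `1` whose members are invariant under all gyroautomorphisms. -/
def StronglyTopologicalGyrogroup (G : Type u) [Gyrogroup G] [TopologicalSpace G] : Prop :=
  ContinuousGyroOps G ∧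
  ∃ 𝒰 : Set (Set G), (∀ U ∈ 𝒰, U ∈ nhds (one : G)) ∧
    (∀ V ∈ nhds (one : G), ∃ U ∈ 𝒰, U ⊆ V) ∧
    (∀ U ∈ 𝒰, ∀ x y : G, (gyr x y) '' U = U)

def StronglyTopologicallyOrderable (G : Type u) [Gyrogroup G] [TopologicalSpace G] : Prop :=
  StronglyTopologicalGyrogroup G ∧ TopologicallyOrderable G

end Gyrogroup

/-!
If `𝓝 one` is countably generated, the left uniformity, whose entourages are the sets
`{(x, y) | (⊖x) ⊕ y ∈ V}`, is countably generated and induces the topology (the gyr-invariant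
neighbourhoods make it symmetric and transitive), so `G` is metrizable.

Otherwise one side of `one` in the order, say the left, has uncountable cofinality, so every
countable intersection of neighbourhoods of `one` contains an interval `(b, one)`. Shrinking a
neighbourhood `V` of `one` countably often (`W ⊕ W ⊆ V`) yields a gyr-invariant subgyrogroup
`K ⊆ V` that is a countable intersection of neighbourhoods; it then has nonempty interior, so
translating shows it is open, hence clopen. Consequently the smallest gyr-invariant subgyrogroups
containing the intervals `(b, one)` form a chain of clopen L-subgyrogroups which is a base at `one`.
-/

open Filter

namespace Filter

variable {α ι : Type*} {f : Filter α} {p : ι → Prop} {s : ι → Set α}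

theorem neBot_of_not_isCountablyGenerated (h : ¬f.IsCountablyGenerated) : f.NeBot :=
  ⟨fun hf => h (hf ▸ isCountablyGenerated_bot)⟩

/-- Either a basic set lies inside every `t n`, or the basic sets chosen inside the `t n` form a
countable basis. -/
theorem HasBasis.iInter_mem_of_not_isCountablyGenerated (hf : f.HasBasis p s)
    (hs : ∀ i j, s i ⊆ s j ∨ s j ⊆ s i) (h : ¬f.IsCountablyGenerated) {t : ℕ → Set α}
    (ht : ∀ n, t n ∈ f) : ⋂ n, t n ∈ f := by
  choose i hi hit using fun n => hf.mem_iff.1 (ht n)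
  by_contra hnot
  refine h (hf.to_hasBasis (p' := fun _ : ℕ => True) (fun j hj => ?_)
    (fun n _ => ⟨i n, hi n, subset_rfl⟩)).isCountablyGenerated
  by_contra! hbelow
  exact hnot (mem_of_superset (hf.mem_of_mem hj) (subset_iInter fun n =>
    ((hs j (i n)).resolve_right (hbelow n trivial)).trans (hit n)))

theorem HasBasis.nonempty_interior_of_mem [TopologicalSpace α] [f.NeBot] (hf : f.HasBasis p s)
    (hopen : ∀ i, IsOpen (s i)) {t : Set α} (ht : t ∈ f) : (interior t).Nonempty := by
  obtain ⟨i, hi, hst⟩ := hf.mem_iff.1 ht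
  exact (nonempty_of_mem (hf.mem_of_mem hi)).mono (interior_maximal hst (hopen i))

end Filter

section LinearOrder

variable {α : Type*} [TopologicalSpace α] [LinearOrder α] [OrderTopology α] {a : α}

theorem exists_open_chain_basis_of_not_isCountablyGenerated
    (h : ¬(𝓝 a).IsCountablyGenerated) :
    ∃ (f : Filter α) (p : α → Prop) (s : α → Set α), f ≤ 𝓝 a ∧ ¬f.IsCountablyGenerated ∧
      f.HasBasis p s ∧ (∀ i j, s i ⊆ s j ∨ s j ⊆ s i) ∧ ∀ i, IsOpen (s i) := by
  have hsides : ¬(𝓝[<] a).IsCountablyGenerated ∨ ¬(𝓝[>] a).IsCountablyGenerated := by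
    contrapose! h
    obtain ⟨_, _⟩ := h
    rw [← nhdsNE_sup_pure, ← nhdsLT_sup_nhdsGT]
    infer_instance
  rcases hsides with hlt | hgt
  · have := neBot_of_not_isCountablyGenerated hlt
    exact ⟨_, _, _, nhdsWithin_le_nhds, hlt,
      nhdsLT_basis_of_exists_lt (Filter.nonempty_of_mem (self_mem_nhdsWithin : Iio a ∈ 𝓝[<] a)),
      fun i j => (le_total j i).imp Ioo_subset_Ioo_left Ioo_subset_Ioo_left,
      fun _ => isOpen_Ioo⟩
  · have := neBot_of_not_isCountablyGenerated hgt
    exact ⟨_, _, _, nhdsWithin_le_nhds, hgt,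
      nhdsGT_basis_of_exists_gt (Filter.nonempty_of_mem (self_mem_nhdsWithin : Ioi a ∈ 𝓝[>] a)),
      fun i j => (le_total i j).imp Ioo_subset_Ioo_right Ioo_subset_Ioo_right,
      fun _ => isOpen_Ioo⟩

theorem nonempty_interior_iInter_of_not_isCountablyGenerated
    (h : ¬(𝓝 a).IsCountablyGenerated) {U : ℕ → Set α} (hU : ∀ n, U n ∈ 𝓝 a) :
    (interior (⋂ n, U n)).Nonempty := by
  obtain ⟨f, p, s, hfa, hf, hbasis, hchain, hopen⟩ :=
    exists_open_chain_basis_of_not_isCountablyGenerated h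
  have := neBot_of_not_isCountablyGenerated hf
  exact hbasis.nonempty_interior_of_mem hopen
    (hbasis.iInter_mem_of_not_isCountablyGenerated hchain hf fun n => hfa (hU n))

theorem exists_chain_nonempty_interior_of_not_isCountablyGenerated
    (h : ¬(𝓝 a).IsCountablyGenerated) :
    ∃ 𝓑 : Set (Set α), IsChain (· ⊆ ·) 𝓑 ∧ (∀ B ∈ 𝓑, (interior B).Nonempty) ∧
      ∀ V ∈ 𝓝 a, ∃ B ∈ 𝓑, B ⊆ V := by
  obtain ⟨f, p, s, hfa, hf, hbasis, hchain, hopen⟩ :=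
    exists_open_chain_basis_of_not_isCountablyGenerated h
  have := neBot_of_not_isCountablyGenerated hf
  refine ⟨s '' {i | p i}, ?_, ?_, fun V hV => ?_⟩
  · rintro _ ⟨i, -, rfl⟩ _ ⟨j, -, rfl⟩ -
    exact hchain i j
  · rintro _ ⟨i, hi, rfl⟩
    exact hbasis.nonempty_interior_of_mem hopen (hbasis.mem_of_mem hi)
  · obtain ⟨i, hi, hiV⟩ := hbasis.mem_iff.1 (hfa hV)
    exact ⟨s i, mem_image_of_mem s hi, hiV⟩

end LinearOrder

namespace Gyrogroup

variable {G : Type u} [Gyrogroup G]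

theorem op_left_injective (a : G) : Function.Injective (op a) := by
  intro x y hxy
  have key : ∀ z, op (inv a) (op a z) = gyr (inv a) a z := fun z => by
    rw [gyr_op, inv_op, one_op]
  exact (gyr (inv a) a).injective (by rw [← key, ← key, hxy])

theorem gyr_one_left (a c : G) : gyr one a c = c := by
  have h := gyr_op one a c
  rw [one_op, one_op] at h
  exact (op_left_injective a h).symm

theorem gyr_inv_self (a c : G) : gyr (inv a) a c = c := by
  rw [loop, inv_op, gyr_one_left]

theorem gyr_self_inv (a c : G) : gyr a (inv a) c = c := by
  rw [loop, op_inv, gyr_one_left]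

theorem inv_op_cancel_left (a b : G) : op (inv a) (op a b) = b := by
  rw [gyr_op, inv_op, one_op, gyr_inv_self]

theorem op_inv_cancel_left (a b : G) : op a (op (inv a) b) = b := by
  rw [gyr_op, op_inv, one_op, gyr_self_inv]

theorem eq_inv_of_op_eq_one {a b : G} (h : op a b = one) : b = inv a := by
  rw [← inv_op_cancel_left a b, h, op_one]

theorem inv_one : inv (one : G) = one :=
  (eq_inv_of_op_eq_one (one_op one)).symm

theorem inv_inv (a : G) : inv (inv a) = a :=
  (eq_inv_of_op_eq_one (inv_op a)).symm

theorem gyr_one (x y : G) : gyr x y one = one := by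
  have h := gyr_hom x y one one
  rw [one_op] at h
  calc gyr x y one = op (inv (gyr x y one)) (op (gyr x y one) (gyr x y one)) :=
        (inv_op_cancel_left _ _).symm
    _ = one := by rw [← h, inv_op]

theorem gyr_inv (x y a : G) : gyr x y (inv a) = inv (gyr x y a) :=
  eq_inv_of_op_eq_one (by rw [← gyr_hom, op_inv, gyr_one])

theorem gyr_inv_op_inv (a b : G) : gyr a b (op (inv b) (inv a)) = inv (op a b) :=
  eq_inv_of_op_eq_one (by rw [← gyr_op, op_inv_cancel_left, op_inv])

def IsGyrInvariant (H : Set G) : Prop :=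
  ∀ x y : G, gyr x y '' H = H

theorem isGyrInvariant_iff {H : Set G} :
    IsGyrInvariant H ↔ ∀ x y a : G, gyr x y a ∈ H ↔ a ∈ H := by
  refine forall₂_congr fun x y => ⟨fun h a => ?_, fun h => ?_⟩
  · conv_lhs => rw [← h]
    exact (gyr x y).injective.mem_set_image
  · ext z
    obtain ⟨a, rfl⟩ := (gyr x y).surjective z
    rw [(gyr x y).injective.mem_set_image, h]

structure IsInvariantSubgyrogroup (H : Set G) : Prop where
  one_mem : one ∈ H
  op_mem : ∀ {a b}, a ∈ H → b ∈ H → op a b ∈ H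
  inv_mem : ∀ {a}, a ∈ H → inv a ∈ H
  gyr_invariant : IsGyrInvariant H

namespace IsGyrInvariant

variable {H K : Set G}

theorem gyr_mem_iff (hH : IsGyrInvariant H) {x y a : G} : gyr x y a ∈ H ↔ a ∈ H :=
  isGyrInvariant_iff.1 hH x y a

theorem inter (hH : IsGyrInvariant H) (hK : IsGyrInvariant K) : IsGyrInvariant (H ∩ K) :=
  isGyrInvariant_iff.2 fun _ _ _ => and_congr hH.gyr_mem_iff hK.gyr_mem_iff

theorem preimage_inv (hH : IsGyrInvariant H) : IsGyrInvariant (inv ⁻¹' H) :=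
  isGyrInvariant_iff.2 fun x y a => by rw [mem_preimage, mem_preimage, ← gyr_inv, hH.gyr_mem_iff]

theorem sInter {𝓗 : Set (Set G)} (h : ∀ H ∈ 𝓗, IsGyrInvariant H) : IsGyrInvariant (⋂₀ 𝓗) :=
  isGyrInvariant_iff.2 fun _ _ _ => by
    simp only [mem_sInter]
    exact forall₂_congr fun H hH => (h H hH).gyr_mem_iff

theorem iInter {ι : Sort*} {V : ι → Set G} (h : ∀ i, IsGyrInvariant (V i)) :
    IsGyrInvariant (⋂ i, V i) :=
  sInter_range V ▸ sInter (forall_mem_range.2 h)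

end IsGyrInvariant

namespace IsInvariantSubgyrogroup

variable {H : Set G}

theorem sInter {𝓗 : Set (Set G)} (h : ∀ H ∈ 𝓗, IsInvariantSubgyrogroup H) :
    IsInvariantSubgyrogroup (⋂₀ 𝓗) where
  one_mem := mem_sInter.2 fun H hH => (h H hH).one_mem
  op_mem ha hb := mem_sInter.2 fun H hH =>
    (h H hH).op_mem (mem_sInter.1 ha H hH) (mem_sInter.1 hb H hH)
  inv_mem ha := mem_sInter.2 fun H hH => (h H hH).inv_mem (mem_sInter.1 ha H hH)
  gyr_invariant := IsGyrInvariant.sInter fun H hH => (h H hH).gyr_invariant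

theorem isLSubgyrogroup (hH : IsInvariantSubgyrogroup H) : IsLSubgyrogroup H :=
  ⟨⟨⟨one, hH.one_mem⟩, hH.one_mem, fun _ ha _ hb => hH.op_mem ha hb, fun _ ha => hH.inv_mem ha,
      fun a _ b _ => by
        simpa only [hH.gyr_invariant a b] using
          InjOn.bijOn_image (s := H) (gyr a b).injective.injOn⟩,
    fun g h _ => hH.gyr_invariant g h⟩

end IsInvariantSubgyrogroup

def invariantClosure (A : Set G) : Set G :=
  ⋂₀ {H | IsInvariantSubgyrogroup H ∧ A ⊆ H}

theorem isInvariantSubgyrogroup_invariantClosure (A : Set G) :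
    IsInvariantSubgyrogroup (invariantClosure A) :=
  IsInvariantSubgyrogroup.sInter fun _ hH => hH.1

theorem subset_invariantClosure (A : Set G) : A ⊆ invariantClosure A :=
  subset_sInter fun _ hH => hH.2

theorem invariantClosure_subset {A H : Set G} (hH : IsInvariantSubgyrogroup H) (hAH : A ⊆ H) :
    invariantClosure A ⊆ H :=
  sInter_subset_of_mem ⟨hH, hAH⟩

theorem invariantClosure_mono {A B : Set G} (hAB : A ⊆ B) :
    invariantClosure A ⊆ invariantClosure B :=
  invariantClosure_subset (isInvariantSubgyrogroup_invariantClosure B)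
    (hAB.trans (subset_invariantClosure B))

section Topology

variable [TopologicalSpace G] (hc : Continuous fun p : G × G => op p.1 p.2)
include hc

def opHomeomorph (a : G) : G ≃ₜ G where
  toFun := op a
  invFun := op (inv a)
  left_inv := inv_op_cancel_left a
  right_inv := op_inv_cancel_left a
  continuous_toFun := hc.comp (continuous_const.prodMk continuous_id)
  continuous_invFun := hc.comp (continuous_const.prodMk continuous_id)

theorem nhds_eq_comap_op (a x : G) : 𝓝 x = comap (op a) (𝓝 (op a x)) :=
  (opHomeomorph hc a).nhds_eq_comap x

theorem mem_nhds_one_of_nonempty_interior {S : Set G}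
    (hop : ∀ a ∈ S, ∀ b ∈ S, op a b ∈ S) (hinv : ∀ a ∈ S, inv a ∈ S)
    (hS : (interior S).Nonempty) : S ∈ 𝓝 one := by
  obtain ⟨t, ht⟩ := hS
  rw [nhds_eq_comap_op hc t, op_one]
  refine mem_of_superset (preimage_mem_comap (isOpen_interior.mem_nhds ht)) fun z hz => ?_
  rw [← inv_op_cancel_left t z]
  exact hop _ (hinv t (interior_subset ht)) _ (interior_subset hz)

theorem IsInvariantSubgyrogroup.isClopen {H : Set G} (hH : IsInvariantSubgyrogroup H)
    (hnhds : H ∈ 𝓝 one) : IsClopen H := by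
  have hnhds_at : ∀ x, op (inv x) ⁻¹' H ∈ 𝓝 x := fun x => by
    rw [nhds_eq_comap_op hc (inv x), inv_op]
    exact preimage_mem_comap hnhds
  refine ⟨⟨isOpen_iff_mem_nhds.2 fun x hx => mem_of_superset (hnhds_at x) fun z hz hzH => hx ?_⟩,
    isOpen_iff_mem_nhds.2 fun x hx => mem_of_superset (hnhds_at x) fun z hz => ?_⟩
  · obtain ⟨k, rfl⟩ : ∃ k, z = op x k := ⟨op (inv x) z, (op_inv_cancel_left x z).symm⟩
    rw [mem_preimage, inv_op_cancel_left] at hz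
    have hx_eq : op (op x k) (gyr x k (inv k)) = x := by rw [← gyr_op, op_inv, op_one]
    exact hx_eq ▸ hH.op_mem hzH (hH.gyr_invariant.gyr_mem_iff.2 (hH.inv_mem hz))
  · rw [← op_inv_cancel_left x z]
    exact hH.op_mem hx hz

end Topology

end Gyrogroup

namespace Gyrogroup.StronglyTopologicalGyrogroup

variable {G : Type u} [Gyrogroup G] [TopologicalSpace G] (hS : StronglyTopologicalGyrogroup G)
include hS

theorem continuous_op : Continuous fun p : G × G => op p.1 p.2 :=
  hS.1.1

theorem exists_nhds_op_subset {U : Set G} (hU : U ∈ 𝓝 one) :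
    ∃ V ∈ 𝓝 one, (∀ a ∈ V, inv a ∈ V) ∧ IsGyrInvariant V ∧ V ⊆ U ∧
      ∀ a ∈ V, ∀ b ∈ V, op a b ∈ U := by
  obtain ⟨⟨hc, hinv⟩, 𝒰, h𝒰nhds, h𝒰base, h𝒰gyr⟩ := hS
  have hop : Tendsto (fun p : G × G => op p.1 p.2) (𝓝 one ×ˢ 𝓝 one) (𝓝 one) := by
    simpa only [← nhds_prod_eq, one_op] using hc.tendsto (one, one)
  obtain ⟨A, hA, B, hB, hAB⟩ := mem_prod_iff.1 (hop hU)
  obtain ⟨W, hW𝒰, hWAB⟩ := h𝒰base _ (inter_mem (inter_mem hA hB) hU)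
  have hW : W ∈ 𝓝 one := h𝒰nhds W hW𝒰
  have hWgyr : IsGyrInvariant W := h𝒰gyr W hW𝒰
  refine ⟨W ∩ inv ⁻¹' W, inter_mem hW (hinv.continuousAt.preimage_mem_nhds (by rwa [inv_one])),
    fun a ha => ⟨ha.2, by rw [mem_preimage, inv_inv]; exact ha.1⟩,
    hWgyr.inter hWgyr.preimage_inv, fun a ha => (hWAB ha.1).2,
    fun a ha b hb => @hAB (a, b) ⟨(hWAB ha.1).1.1, (hWAB hb.1).1.2⟩⟩

/-- Iterating `exists_nhds_op_subset` gives `V (n+1) ⊕ V (n+1) ⊆ V n`, so the intersection is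
closed under the operation. -/
theorem exists_iInter_isInvariantSubgyrogroup {U : Set G} (hU : U ∈ 𝓝 one) :
    ∃ V : ℕ → Set G, (∀ n, V n ∈ 𝓝 one) ∧ IsInvariantSubgyrogroup (⋂ n, V n) ∧
      (⋂ n, V n) ⊆ U := by
  choose! W hW hWinv hWgyr hWsub hWop using fun U (hU : U ∈ 𝓝 (one : G)) =>
    hS.exists_nhds_op_subset hU
  have hiter : ∀ n, W^[n] U ∈ 𝓝 one := fun n => by
    induction n with
    | zero => exact hU
    | succ n ih => rw [Function.iterate_succ_apply']; exact hW _ ih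
  refine ⟨fun n => W (W^[n] U), fun n => hW _ (hiter n), ⟨?_, fun ha hb => ?_, fun ha => ?_, ?_⟩,
    (iInter_subset _ 0).trans (hWsub U hU)⟩
  · exact mem_iInter.2 fun n => mem_of_mem_nhds (hW _ (hiter n))
  · refine mem_iInter.2 fun n => ?_
    have := hWop _ (hiter (n + 1)) _ (mem_iInter.1 ha (n + 1)) _ (mem_iInter.1 hb (n + 1))
    rwa [Function.iterate_succ_apply'] at this
  · exact mem_iInter.2 fun n => hWinv _ (hiter n) _ (mem_iInter.1 ha n)
  · exact IsGyrInvariant.iInter fun n => hWgyr _ (hiter n)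

theorem exists_isInvariantSubgyrogroup_mem_nhds
    (hG : ∀ U : ℕ → Set G, (∀ n, U n ∈ 𝓝 one) → (interior (⋂ n, U n)).Nonempty)
    {U : Set G} (hU : U ∈ 𝓝 one) :
    ∃ K, IsInvariantSubgyrogroup K ∧ K ∈ 𝓝 one ∧ K ⊆ U := by
  obtain ⟨V, hV, hK, hKU⟩ := hS.exists_iInter_isInvariantSubgyrogroup hU
  exact ⟨_, hK, mem_nhds_one_of_nonempty_interior hS.continuous_op
    (fun _ ha _ hb => hK.op_mem ha hb) (fun _ ha => hK.inv_mem ha) (hG V hV), hKU⟩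

def leftUniformityCore : UniformSpace.Core G where
  uniformity := comap (fun p : G × G => op (inv p.1) p.2) (𝓝 one)
  refl := by
    rintro s ⟨t, ht, hts⟩
    refine mem_principal.2 fun p (hp : p.1 = p.2) => hts ?_
    rw [mem_preimage, ← hp, inv_op]
    exact mem_of_mem_nhds ht
  symm := tendsto_comap_iff.2 fun V hV => by
    obtain ⟨W, hW, hWinv, hWgyr, hWV, -⟩ := hS.exists_nhds_op_subset hV
    refine mem_map.2 (mem_of_superset (preimage_mem_comap hW) fun p hp => hWV ?_)
    have key := gyr_inv_op_inv (inv p.1) p.2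
    rw [inv_inv] at key
    exact hWgyr.gyr_mem_iff.1 (key ▸ hWinv _ hp)
  comp := by
    rintro s ⟨V, hV, hVs⟩
    obtain ⟨W, hW, -, hWgyr, -, hWop⟩ := hS.exists_nhds_op_subset hV
    refine mem_of_superset (mem_lift' (preimage_mem_comap hW)) ?_
    rintro ⟨x, z⟩ ⟨y, hxy, hyz⟩
    apply hVs
    show op (inv x) z ∈ V
    have key : op (op (inv x) y) (gyr (inv x) y (op (inv y) z)) = op (inv x) z := by
      rw [← gyr_op, op_inv_cancel_left]
    exact key ▸ hWop _ hxy _ (hWgyr.gyr_mem_iff.2 hyz)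

theorem metrizableSpace [T0Space G] [(𝓝 (one : G)).IsCountablyGenerated] :
    TopologicalSpace.MetrizableSpace G := by
  have h_eq : ‹TopologicalSpace G› = hS.leftUniformityCore.toTopologicalSpace :=
    TopologicalSpace.ext_nhds fun x => by
      rw [UniformSpace.Core.nhds_toTopologicalSpace, leftUniformityCore, comap_comap,
        nhds_eq_comap_op hS.continuous_op (inv x) x, inv_op]
      rfl
  let _ := UniformSpace.ofCoreEq _ _ h_eq
  have : (uniformity G).IsCountablyGenerated :=
    Filter.comap.isCountablyGenerated _ _
  exact UniformSpace.metrizableSpace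

end Gyrogroup.StronglyTopologicalGyrogroup

namespace Gyrogroup

variable {G : Type u} [Gyrogroup G] [TopologicalSpace G]

/-- Invariant closures are monotone, and the invariant closure of a set with nonempty interior is
an open subgyrogroup. -/
theorem exists_chain_basis_of_isChain (hc : Continuous fun p : G × G => op p.1 p.2)
    (hK : ∀ U ∈ 𝓝 (one : G), ∃ K, IsInvariantSubgyrogroup K ∧ K ∈ 𝓝 one ∧ K ⊆ U)
    {𝓑 : Set (Set G)} (h𝓑 : IsChain (· ⊆ ·) 𝓑) (hint : ∀ B ∈ 𝓑, (interior B).Nonempty)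
    (hbase : ∀ U ∈ 𝓝 (one : G), ∃ B ∈ 𝓑, B ⊆ U) :
    ∃ ℋ : Set (Set G), (∀ H ∈ ℋ, H ∈ nhds (one : G)) ∧
      (∀ V ∈ nhds (one : G), ∃ H ∈ ℋ, H ⊆ V) ∧
      (∀ H ∈ ℋ, ∀ K ∈ ℋ, H ⊆ K ∨ K ⊆ H) ∧
      (∀ H ∈ ℋ, IsClopen H ∧ IsLSubgyrogroup H ∧ ∀ x y : G, (gyr x y) '' H = H) := by
  have hnhds : ∀ B ∈ 𝓑, invariantClosure B ∈ 𝓝 one := fun B hB =>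
    have hH := isInvariantSubgyrogroup_invariantClosure B
    mem_nhds_one_of_nonempty_interior hc (fun _ ha _ hb => hH.op_mem ha hb)
      (fun _ ha => hH.inv_mem ha) ((hint B hB).mono (interior_mono (subset_invariantClosure B)))
  refine ⟨invariantClosure '' 𝓑, ?_, fun V hV => ?_, ?_, ?_⟩
  · rintro _ ⟨B, hB, rfl⟩
    exact hnhds B hB
  · obtain ⟨K, hK, hKnhds, hKV⟩ := hK V hV
    obtain ⟨B, hB, hBK⟩ := hbase K hKnhds
    exact ⟨_, mem_image_of_mem _ hB, (invariantClosure_subset hK hBK).trans hKV⟩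
  · rintro _ ⟨B, hB, rfl⟩ _ ⟨B', hB', rfl⟩
    exact (h𝓑.total hB hB').imp invariantClosure_mono invariantClosure_mono
  · rintro _ ⟨B, hB, rfl⟩
    have hH := isInvariantSubgyrogroup_invariantClosure B
    exact ⟨hH.isClopen hc (hnhds B hB), hH.isLSubgyrogroup, hH.gyr_invariant⟩

end Gyrogroup

open Gyrogroup
/-- A strongly topologically orderable gyrogroup is either metrizable or has a totally
ordered local base at the identity consisting of clopen gyr-invariant L-subgyrogroups. -/
theorem stmt9 {G : Type u} [Gyrogroup G] [TopologicalSpace G]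
    (h : StronglyTopologicallyOrderable G) :
    TopologicalSpace.MetrizableSpace G ∨
    ∃ ℋ : Set (Set G), (∀ H ∈ ℋ, H ∈ nhds (one : G)) ∧
      (∀ V ∈ nhds (one : G), ∃ H ∈ ℋ, H ⊆ V) ∧
      (∀ H ∈ ℋ, ∀ K ∈ ℋ, H ⊆ K ∨ K ⊆ H) ∧
      (∀ H ∈ ℋ, IsClopen H ∧ IsLSubgyrogroup H ∧ ∀ x y : G, (gyr x y) '' H = H) := by
  obtain ⟨hS, l, hl⟩ := h
  let _ := l
  have : OrderTopology G := ⟨hl⟩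
  by_cases hcg : (𝓝 (one : G)).IsCountablyGenerated
  · exact Or.inl hS.metrizableSpace
  obtain ⟨𝓑, h𝓑, hint, hbase⟩ := exists_chain_nonempty_interior_of_not_isCountablyGenerated hcg
  exact Or.inr (exists_chain_basis_of_isChain hS.continuous_op
    (fun U hU => hS.exists_isInvariantSubgyrogroup_mem_nhds
      (fun V hV => nonempty_interior_iInter_of_not_isCountablyGenerated hcg hV) hU)
    h𝓑 hint hbase)
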